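/- arXiv:2304.13578 — 4 statements merged into one kernel-verified Lean document; each statement's English description precedes it below -/
import Mathlib

section
/- If F is a skew-symmetric 4×4 real matrix, M is the Minkowski metric matrix diag(-1,1,1,1), h > 0, and vectors u⁺, u⁻ ∈ ℝ⁴ satisfy M(u⁺ - u⁻) = (h/2) F (u⁺ + u⁻), then (1/2)(u⁺)ᵀ M u⁺ = (1/2)(u⁻)ᵀ M u⁻. -/
open Matrix

/-- Mass-shell conservation of the explicit leapfrog step. -/
theorem leapfrog_mass_shell
    (F : Matrix (Fin 4) (Fin 4) ℝ) (hF : Fᵀ = -F)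
    (M : Matrix (Fin 4) (Fin 4) ℝ) (hM : M = Matrix.diagonal ![-1, 1, 1, 1])
    (h : ℝ) (hh : 0 < h)
    (uplus uminus : Fin 4 → ℝ)
    (hstep : M *ᵥ (uplus - uminus) = (h / 2) • (F *ᵥ (uplus + uminus))) :
    (1 / 2) * (uplus ⬝ᵥ (M *ᵥ uplus)) = (1 / 2) * (uminus ⬝ᵥ (M *ᵥ uminus)) := by
  have hMsymm : Mᵀ = M := by rw [hM]; exact Matrix.diagonal_transpose _
  set s := uplus + uminus with hs
  have hskew : s ⬝ᵥ (F *ᵥ s) = 0 := by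
    have h1 : s ⬝ᵥ (F *ᵥ s) = (Fᵀ *ᵥ s) ⬝ᵥ s := by
      rw [Matrix.dotProduct_mulVec, ← Matrix.mulVec_transpose]
    rw [hF, Matrix.neg_mulVec, neg_dotProduct] at h1
    have h2 : s ⬝ᵥ (F *ᵥ s) = (F *ᵥ s) ⬝ᵥ s := dotProduct_comm _ _
    linarith
  have hkey : s ⬝ᵥ (M *ᵥ (uplus - uminus)) = 0 := by
    rw [hstep, dotProduct_smul, hskew, smul_zero]
  have hcross : uminus ⬝ᵥ (M *ᵥ uplus) = uplus ⬝ᵥ (M *ᵥ uminus) := by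
    rw [Matrix.dotProduct_mulVec, ← Matrix.mulVec_transpose, hMsymm, dotProduct_comm]
  have hexp : s ⬝ᵥ (M *ᵥ (uplus - uminus)) =
      uplus ⬝ᵥ (M *ᵥ uplus) - uminus ⬝ᵥ (M *ᵥ uminus) := by
    rw [hs, Matrix.mulVec_sub, add_dotProduct, dotProduct_sub,
      dotProduct_sub, hcross]
    ring
  rw [hexp] at hkey
  linarith
end

section
/- Let F be a skew-symmetric 4×4 real matrix, M = diag(-1,1,1,1), and h > 0 small enough that M - (h/2)F is invertible. The map Φ_h : ℝ⁴ × ℝ⁴ → ℝ⁴ × ℝ⁴ defined by û = Cay((h/2) M⁻¹ F) u and x̂ = x + h û preserves volume, i.e., the absolute value of the determinant of its Jacobian equals 1 at every point. More generally, if F = F(x) depends smoothly on x, the map (x,u) ↦ (x + h û, û) with û = Cay((h/2) M⁻¹ F(x)) u is volume-preserving. -/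
open Matrix

attribute [local instance] Matrix.normedAddCommGroup Matrix.normedSpace

private lemma matDiffAt {f : (Fin 4 → ℝ) → Matrix (Fin 4) (Fin 4) ℝ} {x : Fin 4 → ℝ}
    (hf : ∀ i j, DifferentiableAt ℝ (fun x => f x i j) x) :
    DifferentiableAt ℝ f x :=
  differentiableAt_pi.mpr fun i => differentiableAt_pi.mpr fun j => hf i j

private lemma detDiffAt {f : (Fin 4 → ℝ) → Matrix (Fin 4) (Fin 4) ℝ} {x : Fin 4 → ℝ}
    (hf : ∀ i j, DifferentiableAt ℝ (fun x => f x i j) x) :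
    DifferentiableAt ℝ (fun x => (f x).det) x := by
  simp only [Matrix.det_apply']
  exact DifferentiableAt.fun_sum fun σ _ =>
    DifferentiableAt.const_mul
      (HasFDerivAt.finset_prod (fun i _ => (hf (σ i) i).hasFDerivAt)).differentiableAt _

private lemma invEntryDiffAt {f : (Fin 4 → ℝ) → Matrix (Fin 4) (Fin 4) ℝ} {x : Fin 4 → ℝ}
    (hf : ∀ i j, DifferentiableAt ℝ (fun x => f x i j) x)
    (hdet : (f x).det ≠ 0) (i j : Fin 4) :
    DifferentiableAt ℝ (fun x => (f x)⁻¹ i j) x := by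
  have hrw : (fun x => (f x)⁻¹ i j) =
      fun x => ((f x).det)⁻¹ * ((f x).updateRow j (Pi.single i 1)).det := by
    funext y
    rw [Matrix.inv_def, Matrix.smul_apply, Ring.inverse_eq_inv, Matrix.adjugate_apply,
      smul_eq_mul]
  rw [hrw]
  have hadj : DifferentiableAt ℝ (fun x => ((f x).updateRow j (Pi.single i 1)).det) x := by
    apply detDiffAt
    intro k l
    by_cases hk : k = j
    · subst hk
      simpa using (differentiableAt_const (Pi.single (f := fun _ => ℝ) i 1 l))
    · simpa [Matrix.updateRow_apply, hk] using hf k l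
  exact ((detDiffAt hf).inv hdet).mul hadj

private lemma detBlocksAux {m : Type*} [Fintype m] [DecidableEq m] (h : ℝ)
    (Am C : Matrix m m ℝ) :
    (Matrix.fromBlocks (1 + h • Am) (h • C) Am C).det = C.det := by
  have hfac : Matrix.fromBlocks (1 + h • Am) (h • C) Am C =
      Matrix.fromBlocks 1 (h • (1 : Matrix m m ℝ)) 0 1 * Matrix.fromBlocks 1 0 Am C := by
    rw [Matrix.fromBlocks_multiply]
    simp only [Matrix.one_mul, Matrix.mul_zero, Matrix.zero_mul, Matrix.mul_one,
      Matrix.smul_mul, add_zero, zero_add]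
  rw [hfac, Matrix.det_mul, Matrix.det_fromBlocks_zero₂₁, Matrix.det_fromBlocks_zero₁₂]
  simp

/-- Volume preservation of the one-step map of the explicit leapfrog method:
for a (possibly `x`-dependent) skew-symmetric field `F(x)` depending smoothly
on `x`, the map `(x,u) ↦ (x + h û, û)` with
`û = Cay((h/2) M⁻¹ F(x)) u`, `Cay(Z) = (I - Z)⁻¹(I + Z)`, has Jacobian of
determinant with absolute value 1 at every point (this covers in particular
the case of a constant matrix `F`). -/
theorem leapfrog_one_step_volume_preserving
    (M : Matrix (Fin 4) (Fin 4) ℝ) (hM : M = Matrix.diagonal ![-1, 1, 1, 1])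
    (h : ℝ) (hh : 0 < h)
    (F : (Fin 4 → ℝ) → Matrix (Fin 4) (Fin 4) ℝ)
    (hFsmooth : ∀ i j, ContDiff ℝ (⊤ : ℕ∞) fun x => F x i j)
    (hFskew : ∀ x, (F x)ᵀ = -(F x))
    (Z : (Fin 4 → ℝ) → Matrix (Fin 4) (Fin 4) ℝ)
    (hZ : ∀ x, Z x = (h / 2) • (M⁻¹ * F x))
    (hinv : ∀ x, IsUnit (1 - Z x))
    (Cay : (Fin 4 → ℝ) → Matrix (Fin 4) (Fin 4) ℝ)
    (hCay : ∀ x, Cay x = (1 - Z x)⁻¹ * (1 + Z x))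
    (Φ : (Fin 4 → ℝ) × (Fin 4 → ℝ) → (Fin 4 → ℝ) × (Fin 4 → ℝ))
    (hΦ : ∀ q, Φ q = (q.1 + h • (Cay q.1 *ᵥ q.2), Cay q.1 *ᵥ q.2)) :
    ∀ q, |LinearMap.det ((fderiv ℝ Φ q).toLinearMap)| = 1 := by
  classical
  -- basic facts about `M`
  have hMdet : M.det = -1 := by
    rw [hM, Matrix.det_diagonal, Fin.prod_univ_four]; norm_num [Matrix.cons_val]
    simp
  have hMunit : IsUnit M.det := by rw [hMdet]; exact isUnit_one.neg
  have hMMinv : M * M⁻¹ = 1 := Matrix.mul_nonsing_inv M hMunit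
  have hMT : Mᵀ = M := by rw [hM]; exact Matrix.diagonal_transpose _
  -- differentiability of the entries of `Z` and `Cay`
  have hdetne : ∀ y, (1 - Z y).det ≠ 0 := fun y =>
    ((Matrix.isUnit_iff_isUnit_det _).mp (hinv y)).ne_zero
  have hZent : ∀ (y : Fin 4 → ℝ) i j, DifferentiableAt ℝ (fun x => Z x i j) y := by
    intro y i j
    have hrw : (fun x => Z x i j) = fun x => (h / 2) * ∑ k, M⁻¹ i k * F x k j := by
      funext w; rw [hZ]; simp [Matrix.mul_apply]
    rw [hrw]
    exact (DifferentiableAt.fun_sum fun k _ =>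
      (((hFsmooth k j).differentiable (by simp)) y).const_mul _).const_mul _
  have hOneSub : ∀ (y : Fin 4 → ℝ) i j,
      DifferentiableAt ℝ (fun x => (1 - Z x) i j) y := by
    intro y i j
    have hrw : (fun x => (1 - Z x) i j) = fun x => (1 : Matrix (Fin 4) (Fin 4) ℝ) i j - Z x i j := by
      funext w; simp [Matrix.sub_apply]
    rw [hrw]
    exact (differentiableAt_const _).sub (hZent y i j)
  have hCayEnt : ∀ (y : Fin 4 → ℝ) i j, DifferentiableAt ℝ (fun x => Cay x i j) y := by
    intro y i j
    have hrw : (fun x => Cay x i j) =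
        fun x => ∑ k, (1 - Z x)⁻¹ i k * ((1 : Matrix (Fin 4) (Fin 4) ℝ) k j + Z x k j) := by
      funext w; rw [hCay]; simp [Matrix.mul_apply, Matrix.add_apply]
    rw [hrw]
    exact DifferentiableAt.fun_sum fun k _ =>
      (invEntryDiffAt (hOneSub y) (hdetne y) i k).mul
        ((differentiableAt_const _).add (hZent y k j))
  intro q
  obtain ⟨x, u⟩ := q
  have hCayDiff : DifferentiableAt ℝ Cay x := matDiffAt (hCayEnt x)
  -- the bundled "multiplication by a matrix" map
  let Tc : Matrix (Fin 4) (Fin 4) ℝ →L[ℝ] ((Fin 4 → ℝ) →L[ℝ] (Fin 4 → ℝ)) :=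
    LinearMap.toContinuousLinearMap
      ((LinearMap.toContinuousLinearMap :
          ((Fin 4 → ℝ) →ₗ[ℝ] (Fin 4 → ℝ)) ≃ₗ[ℝ] ((Fin 4 → ℝ) →L[ℝ] (Fin 4 → ℝ))).toLinearMap ∘ₗ
        (Matrix.toLin' : Matrix (Fin 4) (Fin 4) ℝ ≃ₗ[ℝ] _).toLinearMap)
  have hTc : ∀ (A : Matrix (Fin 4) (Fin 4) ℝ) (v : Fin 4 → ℝ), Tc A v = A *ᵥ v := by
    intro A v
    simp [Tc, Matrix.toLin'_apply]
  -- derivative of Φ at (x, u)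
  set Dc := fderiv ℝ Cay x with hDcdef
  have hc : HasFDerivAt (fun p : (Fin 4 → ℝ) × (Fin 4 → ℝ) => Tc (Cay p.1))
      ((Tc.comp Dc).comp (ContinuousLinearMap.fst ℝ (Fin 4 → ℝ) (Fin 4 → ℝ))) (x, u) :=
    by have := (Tc.hasFDerivAt.comp _ hCayDiff.hasFDerivAt).comp (f := Prod.fst) (x, u) hasFDerivAt_fst
       exact this
  have hg : HasFDerivAt (fun p : (Fin 4 → ℝ) × (Fin 4 → ℝ) => Tc (Cay p.1) p.2)
      ((Tc (Cay x)).comp (ContinuousLinearMap.snd ℝ (Fin 4 → ℝ) (Fin 4 → ℝ)) +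
        (((Tc.comp Dc).comp (ContinuousLinearMap.fst ℝ (Fin 4 → ℝ) (Fin 4 → ℝ))).flip u)) (x, u) :=
    hc.clm_apply hasFDerivAt_snd
  set Dg := (Tc (Cay x)).comp (ContinuousLinearMap.snd ℝ (Fin 4 → ℝ) (Fin 4 → ℝ)) +
      (((Tc.comp Dc).comp (ContinuousLinearMap.fst ℝ (Fin 4 → ℝ) (Fin 4 → ℝ))).flip u) with hDgdef
  set L := (ContinuousLinearMap.fst ℝ (Fin 4 → ℝ) (Fin 4 → ℝ) + h • Dg).prod Dg with hLdef
  have hL : HasFDerivAt Φ L (x, u) := by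
    have hfun : (fun p : (Fin 4 → ℝ) × (Fin 4 → ℝ) =>
        (p.1 + h • Tc (Cay p.1) p.2, Tc (Cay p.1) p.2)) = Φ := by
      funext p; rw [hΦ]; simp [hTc]
    have := (hasFDerivAt_fst.fun_add (hg.fun_const_smul h)).prodMk hg
    rw [hfun] at this
    exact this
  rw [hL.fderiv]
  -- the Jacobian matrix
  set Am : Matrix (Fin 4) (Fin 4) ℝ :=
    LinearMap.toMatrix' (((Tc.comp Dc).flip u).toLinearMap) with hAmdef
  have hAm : ∀ ξ, Am *ᵥ ξ = Tc (Dc ξ) u := by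
    intro ξ
    have h1 : Matrix.toLin' Am = ((Tc.comp Dc).flip u).toLinearMap :=
      Matrix.toLin'_toMatrix' _
    calc Am *ᵥ ξ = Matrix.toLin' Am ξ := (Matrix.toLin'_apply _ _).symm
      _ = ((Tc.comp Dc).flip u) ξ := by rw [h1]; rfl
      _ = Tc (Dc ξ) u := rfl
  set C := Cay x with hCdef
  set J : Matrix (Fin 4 ⊕ Fin 4) (Fin 4 ⊕ Fin 4) ℝ :=
    Matrix.fromBlocks (1 + h • Am) (h • C) Am C with hJdef
  -- the determinant of L equals the determinant of J
  have hdetL : LinearMap.det (L.toLinearMap) = J.det := by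
    set e := LinearEquiv.sumArrowLequivProdArrow (Fin 4) (Fin 4) ℝ ℝ with hedef
    have hrep : L.toLinearMap = (e : (Fin 4 ⊕ Fin 4 → ℝ) →ₗ[ℝ] _) ∘ₗ
        (Matrix.toLin' J) ∘ₗ (e.symm : ((Fin 4 → ℝ) × (Fin 4 → ℝ)) →ₗ[ℝ] _) := by
      apply LinearMap.ext
      intro p
      have hsymm : (e.symm : ((Fin 4 → ℝ) × (Fin 4 → ℝ)) → (Fin 4 ⊕ Fin 4 → ℝ)) p =
          Sum.elim p.1 p.2 := rfl
      have hmv : J *ᵥ Sum.elim p.1 p.2 =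
          Sum.elim ((1 + h • Am) *ᵥ p.1 + (h • C) *ᵥ p.2) (Am *ᵥ p.1 + C *ᵥ p.2) := by
        rw [hJdef, Matrix.fromBlocks_mulVec]
        congr 1 <;> simp
      have happL : L p = (p.1 + h • (C *ᵥ p.2 + Am *ᵥ p.1), C *ᵥ p.2 + Am *ᵥ p.1) := by
        rw [hLdef]
        simp [hDgdef, hTc, hAm]
      simp only [LinearMap.coe_comp, Function.comp_apply, LinearEquiv.coe_coe,
        ContinuousLinearMap.coe_coe, hsymm, Matrix.toLin'_apply, hmv, happL]
      ext i
      · simp [e, Equiv.sumArrowEquivProdArrow, LinearEquiv.sumArrowLequivProdArrow,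
          Matrix.add_mulVec, Matrix.one_mulVec, Matrix.smul_mulVec, Pi.add_apply,
          Pi.smul_apply, smul_eq_mul]
        ring
      · simp [e, Equiv.sumArrowEquivProdArrow, LinearEquiv.sumArrowLequivProdArrow,
          Pi.add_apply]
        ring
    rw [hrep, LinearMap.det_conj, LinearMap.det_toLin']
  -- the determinant of J equals the determinant of C
  have hdetJ : J.det = C.det := by
    rw [hJdef]; exact detBlocksAux h Am C
  -- the determinant of C is 1
  have hdetC : C.det = 1 := by
    have hZt : (Z x)ᵀ = -(M * Z x * M⁻¹) := by
      rw [hZ, Matrix.transpose_smul, Matrix.transpose_mul, hFskew, Matrix.transpose_nonsing_inv,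
        hMT]
      rw [Matrix.mul_smul, Matrix.smul_mul, ← Matrix.mul_assoc, hMMinv, Matrix.one_mul, Matrix.neg_mul, smul_neg]
    have hconj : 1 - M * Z x * M⁻¹ = M * (1 - Z x) * M⁻¹ := by
      rw [Matrix.mul_sub, Matrix.mul_one, Matrix.sub_mul, hMMinv]
    have h1 : (1 + Z x).det = (1 - Z x).det := by
      calc (1 + Z x).det = ((1 + Z x)ᵀ).det := (Matrix.det_transpose _).symm
        _ = (1 + (Z x)ᵀ).det := by rw [Matrix.transpose_add, Matrix.transpose_one]
        _ = (1 - M * Z x * M⁻¹).det := by rw [hZt, ← sub_eq_add_neg]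
        _ = (M * (1 - Z x) * M⁻¹).det := by rw [hconj]
        _ = M.det * (1 - Z x).det * M⁻¹.det := by rw [Matrix.det_mul, Matrix.det_mul]
        _ = (1 - Z x).det := by
            rw [Matrix.det_nonsing_inv, Ring.inverse_eq_inv, hMdet]; ring
    have hC : C.det = ((1 - Z x).det)⁻¹ * (1 + Z x).det := by
      rw [hCdef, hCay, Matrix.det_mul, Matrix.det_nonsing_inv, Ring.inverse_eq_inv]
    rw [hC, h1, inv_mul_cancel₀ (hdetne x)]
  rw [hdetL, hdetJ, hdetC]
  norm_num
end

section
/- Consider sequences x^n ∈ ℝ³, t^n ∈ ℝ, with u^{n+1/2} = (x^{n+1} - x^n)/h, u^{n-1/2} = (x^n - x^{n-1})/h, γ^{n+1/2} = (t^{n+1} - t^n)/h, γ^{n-1/2} = (t^n - t^{n-1})/h, and x^{n±1/2} = (x^n + x^{n±1})/2, satisfying the discrete-gradient leapfrog relation -(γ^{n+1/2} - γ^{n-1/2})/h = ∇̄φ(x^{n+1/2}, x^{n-1/2}) · (u^{n+1/2} + u^{n-1/2})/2, where ∇̄φ is any discrete gradient of φ. Then γ^{n+1/2} + φ(x^{n+1/2})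 = γ^{n-1/2} + φ(x^{n-1/2}) for all n, i.e., the energy H = γ + φ(x) is exactly conserved. -/
open Matrix

/-- The discrete-gradient leapfrog method conserves the energy
`H = γ + φ(x)` exactly: if the half-step quantities satisfy the
discrete-gradient relation, then `γ^{n+1/2} + φ(x^{n+1/2})` is independent
of `n`. Here `γhalf n`, `uhalf n`, `xhalf n` stand for `γ^{n+1/2}`,
`u^{n+1/2}`, `x^{n+1/2}`. -/
theorem discrete_gradient_leapfrog_energy
    (φ : (Fin 3 → ℝ) → ℝ)
    (Dφ : (Fin 3 → ℝ) → (Fin 3 → ℝ) → (Fin 3 → ℝ))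
    (hD : ∀ a b : Fin 3 → ℝ, Dφ a b ⬝ᵥ (a - b) = φ a - φ b)
    (h : ℝ) (hh : 0 < h)
    (t : ℕ → ℝ) (x : ℕ → Fin 3 → ℝ)
    (γhalf : ℕ → ℝ) (uhalf xhalf : ℕ → Fin 3 → ℝ)
    (hγ : ∀ n, γhalf n = (t (n + 1) - t n) / h)
    (hu : ∀ n, uhalf n = h⁻¹ • (x (n + 1) - x n))
    (hx : ∀ n, xhalf n = (1 / 2 : ℝ) • (x n + x (n + 1)))
    (hstep : ∀ n, -((γhalf (n + 1) - γhalf n) / h)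
      = Dφ (xhalf (n + 1)) (xhalf n) ⬝ᵥ ((1 / 2 : ℝ) • (uhalf (n + 1) + uhalf n))) :
    ∀ n, γhalf n + φ (xhalf n) = γhalf 0 + φ (xhalf 0) := by
  have hne : h ≠ 0 := hh.ne'
  have key : ∀ n, γhalf (n + 1) + φ (xhalf (n + 1)) = γhalf n + φ (xhalf n) := by
    intro n
    have hxd : xhalf (n + 1) - xhalf n = h • ((1 / 2 : ℝ) • (uhalf (n + 1) + uhalf n)) := by
      rw [hx, hx, hu, hu]
      match_scalars <;> field_simp <;> ring
    have := hD (xhalf (n + 1)) (xhalf n)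
    rw [hxd, dotProduct_smul, ← hstep, smul_eq_mul] at this
    have : φ (xhalf (n + 1)) - φ (xhalf n) = -(γhalf (n + 1) - γhalf n) := by
      rw [← this]; field_simp
    linarith
  intro n
  induction n with
  | zero => rfl
  | succ k ih => rw [key k, ih]
end

section
/- Let A(x) = (-φ(x); A(x)) be a 4D vector potential with φ : ℝ³ → ℝ and A : ℝ³ → ℝ³ (independent of the time coordinate t), and M = diag(-1,1,1,1). Consider the variational leapfrog momenta pⁿ = (M - (h/2) A'(xⁿ)ᵀ) u^{n+1/2} + (1/2)(A(xⁿ) + A(x^{n+1})) and p^{n+1} = (M + (h/2) A'(x^{n+1})ᵀ) u^{n+1/2} + (1/2)(A(xⁿ) + A(x^{n+1})), where u^{n+1/2} = (x^{n+1} - xⁿ)/h = (γ^{n+1/2}; u^{n+1/2}). Then the first components of pⁿ and p^{n+1} are both equal to -(γ^{n+1/2} + (1/2)(φ(xⁿ) + φ(x^{n+1}))). Consequently, the discrete energy H^{n+1/2} = γ^{n+1/2} + (1/2)(φ(xⁿ) + φ(x^{n+1})) is exactly conserved: H^{n+1/2} = H^{1/2} for all n. -/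
open Matrix

/-!
A time-independent potential is invariant under translation in the time direction `e₀`, so every
column `A'(x) e₀` of its Jacobian vanishes. Hence the Jacobian terms drop out of the first components
of `(M ∓ (h/2) A'ᵀ) u`, and both momenta `pⁿ` and `p^{n+1}` of a step have first component
`-H^{n+1/2}`. Since the method identifies `p^{n+1}` of step `n` with `pⁿ` of step `n + 1`,
consecutive discrete energies agree.
-/

theorem fderiv_apply_eq_zero_of_forall_add_smul_eq {𝕜 E F : Type*} [NontriviallyNormedField 𝕜]
    [NormedAddCommGroup E] [NormedSpace 𝕜 E] [NormedAddCommGroup F] [NormedSpace 𝕜 F]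
    {f : E → F} {x v : E} (hf : ∀ t : 𝕜, f (x + t • v) = f x) :
    fderiv 𝕜 f x v = 0 := by
  by_cases hd : DifferentiableAt 𝕜 f x
  · rw [← hd.lineDeriv_eq_fderiv, lineDeriv, funext hf, deriv_const]
  · rw [fderiv_zero_of_not_differentiableAt hd, _root_.zero_apply]

theorem transpose_mulVec_apply_eq_zero {m n R : Type*} [CommRing R] [Fintype m]
    {J : Matrix m n R} {i : n} (hJ : ∀ j, J j i = 0) (u : m → R) : (Jᵀ *ᵥ u) i = 0 := by
  simp [mulVec_transpose, vecMul, dotProduct, hJ]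

theorem variational_leapfrog_energy_general
    (M : Matrix (Fin 4) (Fin 4) ℝ) (hM : M = Matrix.diagonal ![-1, 1, 1, 1])
    (sp : (Fin 4 → ℝ) → (Fin 3 → ℝ)) (hsp : ∀ y i, sp y i = y i.succ)
    (φ : (Fin 3 → ℝ) → ℝ)
    (A3 : (Fin 3 → ℝ) → (Fin 3 → ℝ))
    (A : (Fin 4 → ℝ) → (Fin 4 → ℝ))
    (hA : ∀ y, A y = Fin.cons (-φ (sp y)) (A3 (sp y)))
    (jac : (Fin 4 → ℝ) → Matrix (Fin 4) (Fin 4) ℝ)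
    (hjac : ∀ y i j, jac y i j = fderiv ℝ A y (Pi.single j 1) i)
    (h : ℝ)
    (x : ℕ → Fin 4 → ℝ)
    (uhalf : ℕ → Fin 4 → ℝ)
    (γhalf : ℕ → ℝ) (hγ : ∀ n, γhalf n = uhalf n 0)
    (q r : ℕ → Fin 4 → ℝ)
    (hq : ∀ n, q n = (M - (h / 2) • (jac (x n))ᵀ) *ᵥ uhalf n
      + (1 / 2 : ℝ) • (A (x n) + A (x (n + 1))))
    (hr : ∀ n, r n = (M + (h / 2) • (jac (x (n + 1)))ᵀ) *ᵥ uhalf n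
      + (1 / 2 : ℝ) • (A (x n) + A (x (n + 1))))
    (hmethod : ∀ n, r n = q (n + 1))
    (H : ℕ → ℝ)
    (hH : ∀ n, H n = γhalf n + (1 / 2) * (φ (sp (x n)) + φ (sp (x (n + 1))))) :
    (∀ n, q n 0 = -H n ∧ r n 0 = -H n) ∧ (∀ n, H n = H 0) := by
  have hsp_time : ∀ y (t : ℝ), sp (y + t • Pi.single 0 1) = sp y := by
    intro y t; ext i; simp [hsp]
  have hjac_time : ∀ y j, jac y j 0 = 0 := fun y j => by
    rw [hjac]
    exact congrFun (fderiv_apply_eq_zero_of_forall_add_smul_eq fun t => by simp only [hA, hsp_time]) j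
  have hM0 : ∀ u, (M *ᵥ u) 0 = -u 0 := by simp [hM, mulVec_diagonal]
  have hA0 : ∀ y, A y 0 = -φ (sp y) := by simp [hA]
  have hq0 : ∀ n, q n 0 = -H n := fun n => by
    simp only [hq, hH, hγ, Pi.add_apply, Pi.smul_apply, Pi.sub_apply, sub_mulVec, smul_mulVec,
      hM0, transpose_mulVec_apply_eq_zero (hjac_time _), hA0, smul_eq_mul]
    ring
  have hr0 : ∀ n, r n 0 = -H n := fun n => by
    simp only [hr, hH, hγ, Pi.add_apply, Pi.smul_apply, add_mulVec, smul_mulVec,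
      hM0, transpose_mulVec_apply_eq_zero (hjac_time _), hA0, smul_eq_mul]
    ring
  have hstep : ∀ n, H (n + 1) = H n := fun n =>
    neg_inj.mp (by rw [← hq0, ← hmethod, hr0])
  refine ⟨fun n => ⟨hq0 n, hr0 n⟩, fun n => ?_⟩
  induction n with
  | zero => rfl
  | succ n ih => rw [hstep, ih]

/-- For the variational leapfrog integrator with a time-independent 4D vector
potential `A(x) = (-φ(x); A(x))`, the first components of the momenta `pⁿ`
and `p^{n+1}` both equal `-(γ^{n+1/2} + (φ(xⁿ)+φ(x^{n+1}))/2)`; consequently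
the discrete energy `H^{n+1/2} = γ^{n+1/2} + (φ(xⁿ)+φ(x^{n+1}))/2` is exactly
conserved.  Here `sp` extracts the spatial part of a 4-vector, `q n = pⁿ` and
`r n = p^{n+1}` are the momenta of the step from `xⁿ` to `x^{n+1}`, and the
method matches `r n = q (n+1)`. -/
theorem variational_leapfrog_energy
    (M : Matrix (Fin 4) (Fin 4) ℝ) (hM : M = Matrix.diagonal ![-1, 1, 1, 1])
    (sp : (Fin 4 → ℝ) → (Fin 3 → ℝ)) (hsp : ∀ y i, sp y i = y i.succ)
    (φ : (Fin 3 → ℝ) → ℝ) (hφ : Differentiable ℝ φ)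
    (A3 : (Fin 3 → ℝ) → (Fin 3 → ℝ)) (hA3 : Differentiable ℝ A3)
    (A : (Fin 4 → ℝ) → (Fin 4 → ℝ))
    (hA : ∀ y, A y = Fin.cons (-φ (sp y)) (A3 (sp y)))
    (jac : (Fin 4 → ℝ) → Matrix (Fin 4) (Fin 4) ℝ)
    (hjac : ∀ y i j, jac y i j = fderiv ℝ A y (Pi.single j 1) i)
    (h : ℝ) (hh : 0 < h)
    (x : ℕ → Fin 4 → ℝ)
    (uhalf : ℕ → Fin 4 → ℝ) (hu : ∀ n, uhalf n = h⁻¹ • (x (n + 1) - x n))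
    (γhalf : ℕ → ℝ) (hγ : ∀ n, γhalf n = uhalf n 0)
    (q r : ℕ → Fin 4 → ℝ)
    (hq : ∀ n, q n = (M - (h / 2) • (jac (x n))ᵀ) *ᵥ uhalf n
      + (1 / 2 : ℝ) • (A (x n) + A (x (n + 1))))
    (hr : ∀ n, r n = (M + (h / 2) • (jac (x (n + 1)))ᵀ) *ᵥ uhalf n
      + (1 / 2 : ℝ) • (A (x n) + A (x (n + 1))))
    (hmethod : ∀ n, r n = q (n + 1))
    (H : ℕ → ℝ)
    (hH : ∀ n, H n = γhalf n + (1 / 2) * (φ (sp (x n)) + φ (sp (x (n + 1))))) :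
    (∀ n, q n 0 = -H n ∧ r n 0 = -H n) ∧ (∀ n, H n = H 0) :=
  variational_leapfrog_energy_general M hM sp hsp φ A3 A hA jac hjac h x uhalf γhalf hγ q r hq hr
    hmethod H hH
end
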